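/- Let (ℬ_I : I ∈ 𝒟ⁿ) with ℬ_I ⊆ 𝒟^N satisfy Jones' conditions (J1)–(J4) with constant κ_J, and set b_I = ∑_{K∈ℬ_I} h_K. Then the operator B : SL^∞_n → SL^∞_N defined by Bf = ∑_{I∈𝒟ⁿ} (⟨f, h_I⟩/‖h_I‖₂²) b_I satisfies ‖Bf‖_{SL^∞} ≤ ‖f‖_{SL^∞} for all f ∈ SL^∞_n. -/

import Mathlib

open MeasureTheory

/-- The dyadic interval `[j/2^k, (j+1)/2^k)`. -/
noncomputable def dyadicSet (k j : ℕ) : Set ℝ :=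
  Set.Ico ((j : ℝ) / 2 ^ k) (((j : ℝ) + 1) / 2 ^ k)

/-- The `L^∞`-normalized Haar function supported on `[j/2^k, (j+1)/2^k)`. -/
noncomputable def haar (k j : ℕ) (x : ℝ) : ℝ :=
  if x ∈ Set.Ico ((j : ℝ) / 2 ^ k) (((j : ℝ) + 1 / 2) / 2 ^ k) then 1
  else if x ∈ Set.Ico (((j : ℝ) + 1 / 2) / 2 ^ k) (((j : ℝ) + 1) / 2 ^ k) then -1
  else 0

/-- The point-set `B_I = ⋃ ℬ_I` of a collection of dyadic intervals. -/
noncomputable def BSet (ℬ : ℕ → ℕ → Finset (ℕ × ℕ)) (k j : ℕ) : Set ℝ :=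
  ⋃ p ∈ ℬ k j, dyadicSet p.1 p.2

/-- Real-valued measure. -/
noncomputable def msr (s : Set ℝ) : ℝ := (volume s).toReal

/-- Jones' compatibility conditions (J1)–(J4) with constant `κ` for a family
`(ℬ_I : I ∈ 𝒟ⁿ)` of collections of dyadic intervals `ℬ k j ⊆ 𝒟^N` (indexed by level and
position), where the ambient nested collection is `𝒟^N` itself. -/
def JonesD (n N : ℕ) (ℬ : ℕ → ℕ → Finset (ℕ × ℕ)) (κ : ℝ) : Prop :=
  -- (J1) & (J2): each ℬ_I is a (finite) nonempty collection of dyadic intervals of 𝒟^N,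
  -- consisting of pairwise disjoint intervals, and distinct collections are disjoint
  (∀ k j, k ≤ n → j < 2 ^ k →
    (ℬ k j).Nonempty ∧ ∀ p ∈ ℬ k j, p.1 ≤ N ∧ p.2 < 2 ^ p.1) ∧
  (∀ k j, k ≤ n → j < 2 ^ k → ∀ p ∈ ℬ k j, ∀ q ∈ ℬ k j, p ≠ q →
    dyadicSet p.1 p.2 ∩ dyadicSet q.1 q.2 = ∅) ∧
  (∀ k j k' j', k ≤ n → j < 2 ^ k → k' ≤ n → j' < 2 ^ k' → (k, j) ≠ (k', j') →
    ∀ p ∈ ℬ k j, p ∉ ℬ k' j') ∧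
  -- (J3)
  (∀ k j k' j', k ≤ n → j < 2 ^ k → k' ≤ n → j' < 2 ^ k' →
    dyadicSet k j ∩ dyadicSet k' j' = ∅ → BSet ℬ k j ∩ BSet ℬ k' j' = ∅) ∧
  (∀ k j k' j', k ≤ n → j < 2 ^ k → k' ≤ n → j' < 2 ^ k' →
    dyadicSet k j ⊆ dyadicSet k' j' → BSet ℬ k j ⊆ BSet ℬ k' j') ∧
  -- (J4)
  (∀ k j k' j', k ≤ n → j < 2 ^ k → k' ≤ n → j' < 2 ^ k' →
    dyadicSet k j ⊆ dyadicSet k' j' → ∀ p ∈ ℬ k' j',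
      msr (dyadicSet p.1 p.2 ∩ BSet ℬ k j) / msr (dyadicSet p.1 p.2)
        ≥ κ⁻¹ * msr (BSet ℬ k j) / msr (BSet ℬ k' j'))

/-!
Since the intervals of each `ℬ_I` are disjoint, the square function of `Bf` at `x` is
`(∑_{I : x ∈ B_I} a_I²)^{1/2}`. By (J3) the dyadic intervals `I` with `x ∈ B_I` pairwise
intersect, so they form a chain; its smallest member contains a point `y ∈ [0,1)` lying in all of
them, and the square function of `f` at `y` is at least that of `Bf` at `x`.
-/

open Finset

section Dyadic

variable {k j : ℕ} {x : ℝ}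

lemma nonneg_of_mem_dyadicSet (hx : x ∈ dyadicSet k j) : 0 ≤ x :=
  le_trans (by positivity) hx.1

lemma mem_dyadicSet_iff (hx : 0 ≤ x) : x ∈ dyadicSet k j ↔ ⌊x * 2 ^ k⌋₊ = j := by
  rw [Nat.floor_eq_iff (mul_nonneg hx (by positivity)), dyadicSet, Set.mem_Ico,
    div_le_iff₀ (by positivity), lt_div_iff₀ (by positivity)]

lemma div_two_pow_mem_dyadicSet (k j : ℕ) : (j : ℝ) / 2 ^ k ∈ dyadicSet k j :=
  ⟨le_rfl, by gcongr; linarith⟩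

lemma floor_mul_two_pow_eq_div {k' : ℕ} (hk : k ≤ k') :
    ⌊x * 2 ^ k⌋₊ = ⌊x * 2 ^ k'⌋₊ / 2 ^ (k' - k) := by
  have hpow : (2 : ℝ) ^ k' = 2 ^ k * 2 ^ (k' - k) := by rw [← pow_add, Nat.add_sub_cancel' hk]
  rw [← Nat.floor_div_natCast, hpow]
  push_cast
  field_simp

lemma dyadicSet_subset_of_le_of_nonempty_inter {k' j' : ℕ} (hk : k ≤ k')
    (h : (dyadicSet k j ∩ dyadicSet k' j').Nonempty) : dyadicSet k' j' ⊆ dyadicSet k j := by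
  obtain ⟨x, hxI, hxI'⟩ := h
  intro z hz
  have hx0 := nonneg_of_mem_dyadicSet hxI
  have hz0 := nonneg_of_mem_dyadicSet hz
  rw [mem_dyadicSet_iff hx0] at hxI hxI'
  rw [mem_dyadicSet_iff hz0] at hz ⊢
  rw [floor_mul_two_pow_eq_div hk, hz, ← hxI', ← floor_mul_two_pow_eq_div hk, hxI]

end Dyadic

open Classical in
lemma haar_sq (k j : ℕ) (x : ℝ) : haar k j x ^ 2 = if x ∈ dyadicSet k j then 1 else 0 := by
  have h1 : (j : ℝ) / 2 ^ k ≤ ((j : ℝ) + 1 / 2) / 2 ^ k := by gcongr; linarith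
  have h2 : ((j : ℝ) + 1 / 2) / 2 ^ k ≤ ((j : ℝ) + 1) / 2 ^ k := by gcongr; linarith
  unfold haar dyadicSet
  simp only [Set.mem_Ico]
  split_ifs with hl hI hr hI' hI''
  · norm_num
  · exact absurd ⟨hl.1, hl.2.trans_le h2⟩ hI
  · norm_num
  · exact absurd ⟨h1.trans hr.1, hr.2⟩ hI'
  · rcases lt_or_ge x (((j : ℝ) + 1 / 2) / 2 ^ k) with h | h
    exacts [absurd ⟨hI''.1, h⟩ hl, absurd ⟨h, hI''.2⟩ hr]
  · norm_num

lemma haar_sq_le_one (k j : ℕ) (x : ℝ) : haar k j x ^ 2 ≤ 1 := by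
  rw [haar_sq]
  split_ifs <;> norm_num

lemma sum_haar_sq_le_one {s : Finset (ℕ × ℕ)}
    (hs : (s : Set (ℕ × ℕ)).PairwiseDisjoint fun p => dyadicSet p.1 p.2) (x : ℝ) :
    ∑ p ∈ s, haar p.1 p.2 x ^ 2 ≤ 1 := by
  classical
  have hcard : #{p ∈ s | x ∈ dyadicSet p.1 p.2} ≤ 1 := by
    refine card_le_one.2 fun p hp q hq => ?_
    rw [mem_filter] at hp hq
    by_contra hpq
    exact Set.disjoint_left.1 (hs hp.1 hq.1 hpq) hp.2 hq.2
  simp only [haar_sq, sum_boole]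
  exact_mod_cast hcard

lemma sum_haar_sq_le_haar_sq {s : Finset (ℕ × ℕ)}
    (hs : (s : Set (ℕ × ℕ)).PairwiseDisjoint fun p => dyadicSet p.1 p.2) {k j : ℕ} {x y : ℝ}
    (hxy : x ∈ ⋃ p ∈ s, dyadicSet p.1 p.2 → y ∈ dyadicSet k j) :
    ∑ p ∈ s, haar p.1 p.2 x ^ 2 ≤ haar k j y ^ 2 := by
  by_cases hx : x ∈ ⋃ p ∈ s, dyadicSet p.1 p.2
  · rw [haar_sq, if_pos (hxy hx)]
    exact sum_haar_sq_le_one hs x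
  · have hzero : ∑ p ∈ s, haar p.1 p.2 x ^ 2 = 0 := by
      refine sum_eq_zero fun p hp => ?_
      rw [haar_sq, if_neg fun hxp => hx (Set.mem_biUnion hp hxp)]
    rw [hzero]
    positivity

/-- `y` is the left endpoint of the smallest `I` with `x ∈ B_I`; by `hsep` every other such `I`
meets it, hence contains it. -/
lemma exists_mem_dyadicSet_of_mem_BSet {n : ℕ} {ℬ : ℕ → ℕ → Finset (ℕ × ℕ)}
    (hsep : ∀ k j k' j', k ≤ n → j < 2 ^ k → k' ≤ n → j' < 2 ^ k' →
      dyadicSet k j ∩ dyadicSet k' j' = ∅ → BSet ℬ k j ∩ BSet ℬ k' j' = ∅) (x : ℝ) :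
    ∃ y ∈ Set.Ico (0 : ℝ) 1, ∀ k ≤ n, ∀ j < 2 ^ k, x ∈ BSet ℬ k j → y ∈ dyadicSet k j := by
  classical
  set T := {k ∈ range (n + 1) | ∃ j < 2 ^ k, x ∈ BSet ℬ k j}
  rcases T.eq_empty_or_nonempty with hT | hT
  · refine ⟨0, by norm_num, fun k hk j hj hx => absurd hT (Finset.nonempty_iff_ne_empty.1 ?_)⟩
    exact ⟨k, mem_filter.2 ⟨mem_range.2 (Nat.lt_succ_of_le hk), j, hj, hx⟩⟩
  obtain ⟨k₀, hk₀T, hk₀max⟩ := T.exists_max_image id hT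
  obtain ⟨hk₀n, j₀, hj₀, hxB₀⟩ := mem_filter.1 hk₀T
  have hk₀n : k₀ ≤ n := Nat.lt_succ_iff.1 (mem_range.1 hk₀n)
  refine ⟨j₀ / 2 ^ k₀, ⟨by positivity, ?_⟩, fun k hk j hj hxB => ?_⟩
  · rw [div_lt_one (by positivity)]
    exact_mod_cast hj₀
  have hkk₀ : k ≤ k₀ :=
    hk₀max k (mem_filter.2 ⟨mem_range.2 (Nat.lt_succ_of_le hk), j, hj, hxB⟩)
  have hmeet : (dyadicSet k j ∩ dyadicSet k₀ j₀).Nonempty := by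
    rw [Set.nonempty_iff_ne_empty]
    intro hempty
    have hx : x ∈ BSet ℬ k j ∩ BSet ℬ k₀ j₀ := ⟨hxB, hxB₀⟩
    rw [hsep k j k₀ j₀ hk hj hk₀n hj₀ hempty] at hx
    exact hx
  exact dyadicSet_subset_of_le_of_nonempty_inter hkk₀ hmeet (div_two_pow_mem_dyadicSet k₀ j₀)

/-- In `ℝ`, `⨆ x ∈ s` also ranges over `x ∉ s`, which contribute `sSup ∅ = 0`: hence `hg0`. -/
lemma Real.biSup_le_biSup_of_forall_exists_le {α : Type*} {s : Set α} {f g : α → ℝ}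
    (hg0 : ∀ y ∈ s, 0 ≤ g y) (hg : BddAbove (g '' s)) (h : ∀ x ∈ s, ∃ y ∈ s, f x ≤ g y) :
    ⨆ x ∈ s, f x ≤ ⨆ y ∈ s, g y := by
  obtain ⟨M, hM⟩ := hg
  have hbdd : BddAbove (Set.range fun y => ⨆ _ : y ∈ s, g y) := by
    refine ⟨max M 0, ?_⟩
    rintro _ ⟨y, rfl⟩
    exact Real.iSup_le (fun hy => (hM ⟨y, hy, rfl⟩).trans (le_max_left _ _)) (le_max_right _ _)
  have hsup0 : 0 ≤ ⨆ y ∈ s, g y := Real.iSup_nonneg fun y => Real.iSup_nonneg fun hy => hg0 y hy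
  refine Real.iSup_le (fun x => Real.iSup_le (fun hx => ?_) hsup0) hsup0
  obtain ⟨y, hy, hxy⟩ := h x hx
  calc f x ≤ g y := hxy
    _ = ⨆ _ : y ∈ s, g y := (ciSup_pos (f := fun _ => g y) hy).symm
    _ ≤ ⨆ y ∈ s, g y := le_ciSup hbdd y

theorem jones_embedding_norm_one_general (n N : ℕ) (κ : ℝ)
    (ℬ : ℕ → ℕ → Finset (ℕ × ℕ)) (hJ : JonesD n N ℬ κ)
    (a : ℕ → ℕ → ℝ) :
    (⨆ x ∈ Set.Ico (0 : ℝ) 1,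
        Real.sqrt (∑ k ∈ Finset.range (n + 1), ∑ j ∈ Finset.range (2 ^ k),
          ∑ p ∈ ℬ k j, (a k j) ^ 2 * (haar p.1 p.2 x) ^ 2))
      ≤ ⨆ x ∈ Set.Ico (0 : ℝ) 1,
          Real.sqrt (∑ k ∈ Finset.range (n + 1), ∑ j ∈ Finset.range (2 ^ k),
            (a k j) ^ 2 * (haar k j x) ^ 2) := by
  obtain ⟨-, hdisj, -, hsep, -, -⟩ := hJ
  refine Real.biSup_le_biSup_of_forall_exists_le (fun _ _ => Real.sqrt_nonneg _) ?_ ?_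
  · refine ⟨Real.sqrt (∑ k ∈ range (n + 1), ∑ j ∈ range (2 ^ k), a k j ^ 2), ?_⟩
    rintro _ ⟨y, -, rfl⟩
    dsimp only
    gcongr with k _ j _
    exact mul_le_of_le_one_right (sq_nonneg _) (haar_sq_le_one k j y)
  · intro x _
    obtain ⟨y, hy, hxy⟩ := exists_mem_dyadicSet_of_mem_BSet hsep x
    refine ⟨y, hy, Real.sqrt_le_sqrt (sum_le_sum fun k hk => sum_le_sum fun j hj => ?_)⟩
    have hk : k ≤ n := Nat.lt_succ_iff.1 (mem_range.1 hk)
    have hj : j < 2 ^ k := mem_range.1 hj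
    rw [← mul_sum]
    refine mul_le_mul_of_nonneg_left (sum_haar_sq_le_haar_sq ?_ (hxy k hk j hj)) (sq_nonneg _)
    exact fun p hp q hq hpq => Set.disjoint_iff_inter_eq_empty.2 (hdisj k j hk hj p hp q hq hpq)

/-- Theorem 3.3, first estimate: if `(ℬ_I : I ∈ 𝒟ⁿ)` satisfies Jones' conditions and
`b_I = ∑_{K ∈ ℬ_I} h_K`, then the operator `Bf = ∑_I (⟨f,h_I⟩/‖h_I‖₂²) b_I` satisfies
`‖Bf‖_{SL^∞} ≤ ‖f‖_{SL^∞}` for every `f = ∑_{I ∈ 𝒟ⁿ} a_I h_I ∈ SL^∞_n`. -/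
theorem jones_embedding_norm_one (n N : ℕ) (κ : ℝ) (hκ : 1 ≤ κ)
    (ℬ : ℕ → ℕ → Finset (ℕ × ℕ)) (hJ : JonesD n N ℬ κ)
    (a : ℕ → ℕ → ℝ) :
    (⨆ x ∈ Set.Ico (0 : ℝ) 1,
        Real.sqrt (∑ k ∈ Finset.range (n + 1), ∑ j ∈ Finset.range (2 ^ k),
          ∑ p ∈ ℬ k j, (a k j) ^ 2 * (haar p.1 p.2 x) ^ 2))
      ≤ ⨆ x ∈ Set.Ico (0 : ℝ) 1,
          Real.sqrt (∑ k ∈ Finset.range (n + 1), ∑ j ∈ Finset.range (2 ^ k),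
            (a k j) ^ 2 * (haar k j x) ^ 2) :=
  jones_embedding_norm_one_general n N κ ℬ hJ a
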